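/- Let G be a group with a finite generating set 𝒢, and suppose: (i) there is a constant K ≥ 1 such that whenever φ, φ' ∈ G are conjugate there exists a conjugating element η ∈ G with η φ' η⁻¹ = φ and ‖η‖_𝒢 ≤ K(‖φ‖_𝒢 + ‖φ'‖_𝒢); (ii) there is a finite subset F ⊆ G such that every element of G of finite order is conjugate to some element of F; (iii) for every ξ ∈ F the centralizer C(ξ) = {ψ ∈ G : ψξ = ξψ} is finitely generated. Then there exists a constant M₀ > 0 such that for every element φ ∈ G of finite order, the centralizer C(φ) is generated by the set {ψ ∈ C(φ) : ‖ψ‖_𝒢 ≤ M₀·(‖φ‖_𝒢 + 1)}. -/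

import Mathlib

/-- The word length of `g` with respect to a generating set `S`:
the least `n` such that `g` is a product of `n` elements of `S ∪ S⁻¹`. -/
noncomputable def wordLength {G : Type*} [Group G] (S : Set G) (g : G) : ℕ :=
  sInf {n : ℕ | ∃ l : List G, l.length = n ∧ (∀ x ∈ l, x ∈ S ∨ x⁻¹ ∈ S) ∧ l.prod = g}

/-!
Conjugating `φ` into the finite set `F` by an element `η` of linearly controlled length turns the
centralizer of `φ` into the conjugate by `η` of the centralizer of some `ξ ∈ F`. Fixed finite
generating sets of these finitely many centralizers have uniformly bounded length, and conjugating
them by `η` costs at most `2 ‖η‖ ≤ 2K(‖φ‖ + ‖ξ‖)`, which is linear in `‖φ‖`.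
-/

section WordLength

variable {G : Type*} [Group G] {S : Set G}

lemma wordLength_le_length {g : G} {l : List G} (hl : ∀ x ∈ l, x ∈ S ∨ x⁻¹ ∈ S)
    (hprod : l.prod = g) : wordLength S g ≤ l.length :=
  Nat.sInf_le ⟨l, rfl, hl, hprod⟩

lemma exists_list_length_eq_wordLength (hS : Subgroup.closure S = ⊤) (g : G) :
    ∃ l : List G, l.length = wordLength S g ∧ (∀ x ∈ l, x ∈ S ∨ x⁻¹ ∈ S) ∧ l.prod = g := by
  have hg : g ∈ Submonoid.closure (S ∪ S⁻¹) := by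
    rw [← Subgroup.closure_toSubmonoid, hS]
    trivial
  obtain ⟨l, hl, hprod⟩ := Submonoid.exists_list_of_mem_closure hg
  have hne : {n : ℕ | ∃ l : List G, l.length = n ∧ (∀ x ∈ l, x ∈ S ∨ x⁻¹ ∈ S) ∧
      l.prod = g}.Nonempty := ⟨l.length, l, rfl, fun x hx => hl x hx, hprod⟩
  exact Nat.sInf_mem hne

lemma wordLength_mul_le (hS : Subgroup.closure S = ⊤) (a b : G) :
    wordLength S (a * b) ≤ wordLength S a + wordLength S b := by
  obtain ⟨la, hla, ha, rfl⟩ := exists_list_length_eq_wordLength hS a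
  obtain ⟨lb, hlb, hb, rfl⟩ := exists_list_length_eq_wordLength hS b
  rw [← hla, ← hlb, ← List.length_append, ← List.prod_append]
  exact wordLength_le_length (by simpa [or_imp, forall_and] using And.intro ha hb) rfl

lemma wordLength_inv_le (hS : Subgroup.closure S = ⊤) (a : G) :
    wordLength S a⁻¹ ≤ wordLength S a := by
  obtain ⟨l, hl, hgen, rfl⟩ := exists_list_length_eq_wordLength hS a
  rw [← hl, ← List.length_map (f := fun x => x⁻¹), ← List.length_reverse,
    List.prod_inv_reverse]
  refine wordLength_le_length ?_ rfl
  intro x hx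
  simpa [or_comm] using hgen x⁻¹ (by simpa using hx)

lemma wordLength_conj_le (hS : Subgroup.closure S = ⊤) (η s : G) :
    wordLength S (η * s * η⁻¹) ≤ 2 * wordLength S η + wordLength S s := by
  have := wordLength_mul_le hS (η * s) η⁻¹
  have := wordLength_mul_le hS η s
  have := wordLength_inv_le hS η
  omega

end WordLength

lemma Subgroup.centralizer_conj_eq_map {G : Type*} [Group G] (η ξ : G) :
    Subgroup.centralizer {η * ξ * η⁻¹} =
      (Subgroup.centralizer {ξ}).map (MulAut.conj η).toMonoidHom := by
  ext ψ
  simp only [Subgroup.mem_centralizer_singleton_iff, Subgroup.mem_map_equiv,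
    MulAut.conj_symm_apply]
  constructor <;> intro h
  · calc η⁻¹ * ψ * η * ξ = η⁻¹ * (ψ * (η * ξ * η⁻¹)) * η := by group
      _ = η⁻¹ * (η * ξ * η⁻¹ * ψ) * η := by rw [h]
      _ = ξ * (η⁻¹ * ψ * η) := by group
  · calc ψ * (η * ξ * η⁻¹) = η * (η⁻¹ * ψ * η * ξ) * η⁻¹ := by group
      _ = η * (ξ * (η⁻¹ * ψ * η)) * η⁻¹ := by rw [h]
      _ = η * ξ * η⁻¹ * ψ := by group

lemma exists_generators_bounded_of_fg {G ι : Type*} [Group G] {F : Set ι} (hF : F.Finite)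
    {H : ι → Subgroup G} (hH : ∀ i ∈ F, (H i).FG) (f : G → ℕ) :
    ∃ B : ℕ, ∀ i ∈ F, ∃ T : Set G, Subgroup.closure T = H i ∧ ∀ s ∈ T, f s ≤ B := by
  have hlocal : ∀ i ∈ F, ∃ b : ℕ, ∃ T : Set G, Subgroup.closure T = H i ∧ ∀ s ∈ T, f s ≤ b := by
    intro i hi
    obtain ⟨T, hT⟩ := hH i hi
    obtain ⟨b, hb⟩ := (T.finite_toSet.image f).bddAbove
    exact ⟨b, T, hT, fun s hs => hb ⟨s, hs, rfl⟩⟩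
  choose! b hb using hlocal
  obtain ⟨B, hB⟩ := (hF.image b).bddAbove
  refine ⟨B, fun i hi => ?_⟩
  obtain ⟨T, hT, hTb⟩ := hb i hi
  exact ⟨T, hT, fun s hs => (hTb s hs).trans (hB ⟨i, hi, rfl⟩)⟩

lemma two_mul_add_le_linear {K p a b s Bξ Bs : ℝ} (hK : 0 ≤ K) (hp : 0 ≤ p) (hBξ : 0 ≤ Bξ)
    (hBs : 0 ≤ Bs) (ha : a ≤ K * (p + b)) (hb : b ≤ Bξ) (hs : s ≤ Bs) :
    2 * a + s ≤ (2 * K * (Bξ + 1) + Bs + 1) * (p + 1) := by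
  nlinarith [mul_nonneg hK (mul_nonneg hBξ hp), mul_nonneg hK (sub_nonneg.2 hb),
    mul_nonneg hBs hp]

theorem finite_order_centralizer_generators_general
    {G : Type*} [Group G] (𝒢 : Set G)
    (h𝒢gen : Subgroup.closure 𝒢 = ⊤)
    (K : ℝ) (hK : 1 ≤ K)
    (hTao : ∀ φ φ' : G, IsConj φ φ' → ∃ η : G, η * φ' * η⁻¹ = φ ∧
      (wordLength 𝒢 η : ℝ) ≤ K * ((wordLength 𝒢 φ : ℝ) + (wordLength 𝒢 φ' : ℝ)))
    (F : Set G) (hFfin : F.Finite)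
    (hF : ∀ φ : G, IsOfFinOrder φ → ∃ ξ ∈ F, IsConj φ ξ)
    (hC : ∀ ξ ∈ F, (Subgroup.centralizer ({ξ} : Set G)).FG) :
    ∃ M₀ : ℝ, 0 < M₀ ∧ ∀ φ : G, IsOfFinOrder φ →
      Subgroup.closure
        {ψ : G | ψ * φ = φ * ψ ∧ (wordLength 𝒢 ψ : ℝ) ≤ M₀ * ((wordLength 𝒢 φ : ℝ) + 1)}
        = Subgroup.centralizer ({φ} : Set G) := by
  have hK0 : 0 ≤ K := by linarith
  obtain ⟨Bξ, hBξ⟩ := (hFfin.image (wordLength 𝒢)).bddAbove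
  obtain ⟨Bs, hBs⟩ := exists_generators_bounded_of_fg hFfin hC (wordLength 𝒢)
  refine ⟨2 * K * (Bξ + 1) + Bs + 1, by positivity, fun φ hφ => ?_⟩
  obtain ⟨ξ, hξF, hφξ⟩ := hF φ hφ
  obtain ⟨η, rfl, hη⟩ := hTao φ ξ hφξ
  obtain ⟨T, hT, hTBs⟩ := hBs ξ hξF
  refine Subgroup.closure_eq_of_le _
    (fun ψ hψ => Subgroup.mem_centralizer_singleton_iff.2 hψ.1) ?_
  rw [Subgroup.centralizer_conj_eq_map, ← hT, MonoidHom.map_closure]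
  refine Subgroup.closure_mono ?_
  rintro _ ⟨s, hs, rfl⟩
  have hsξ : s ∈ Subgroup.centralizer {ξ} := hT ▸ Subgroup.subset_closure hs
  refine ⟨?_, ?_⟩
  · have := Subgroup.mem_map_of_mem (MulAut.conj η).toMonoidHom hsξ
    rwa [← Subgroup.centralizer_conj_eq_map, Subgroup.mem_centralizer_singleton_iff] at this
  · have hlen := wordLength_conj_le h𝒢gen η s
    have hξ : wordLength 𝒢 ξ ≤ Bξ := hBξ ⟨ξ, hξF, rfl⟩
    calc (wordLength 𝒢 (η * s * η⁻¹) : ℝ)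
        ≤ 2 * (wordLength 𝒢 η : ℝ) + wordLength 𝒢 s := by exact_mod_cast hlen
      _ ≤ _ := two_mul_add_le_linear hK0 (Nat.cast_nonneg _) (Nat.cast_nonneg _)
          (Nat.cast_nonneg _) hη (by exact_mod_cast hξ) (by exact_mod_cast hTBs s hs)

theorem finite_order_centralizer_generators
    {G : Type*} [Group G] (𝒢 : Set G) (h𝒢fin : 𝒢.Finite)
    (h𝒢gen : Subgroup.closure 𝒢 = ⊤)
    (K : ℝ) (hK : 1 ≤ K)
    (hTao : ∀ φ φ' : G, IsConj φ φ' → ∃ η : G, η * φ' * η⁻¹ = φ ∧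
      (wordLength 𝒢 η : ℝ) ≤ K * ((wordLength 𝒢 φ : ℝ) + (wordLength 𝒢 φ' : ℝ)))
    (F : Set G) (hFfin : F.Finite)
    (hF : ∀ φ : G, IsOfFinOrder φ → ∃ ξ ∈ F, IsConj φ ξ)
    (hC : ∀ ξ ∈ F, (Subgroup.centralizer ({ξ} : Set G)).FG) :
    ∃ M₀ : ℝ, 0 < M₀ ∧ ∀ φ : G, IsOfFinOrder φ →
      Subgroup.closure
        {ψ : G | ψ * φ = φ * ψ ∧ (wordLength 𝒢 ψ : ℝ) ≤ M₀ * ((wordLength 𝒢 φ : ℝ) + 1)}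
        = Subgroup.centralizer ({φ} : Set G) :=
  finite_order_centralizer_generators_general 𝒢 h𝒢gen K hK hTao F hFfin hF hC
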